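/- arXiv:2601.11877 — 5 statements merged into one kernel-verified Lean document; each statement's English description precedes it below -/
import Mathlib

section
/- Fix k ∈ ℤ/ℓ with k invertible (k ≠ 0). If two voltage assignments α, β : F_q^⊠ → ℤ/ℓ satisfy θ^α_{a,k} = θ^β_{a,k} for all a ∈ F_q, then α = β. -/
/-!
Summing `θ^α_{a,k}` against `ψ(-a s₀)` over all `a ∈ F_q`, where `ψ = ζ_p^{tr(·)}` is a primitive
additive character of `F_q`, recovers `q ζ_ℓ^{k α(s₀)}` by orthogonality. Since `i ↦ ζ_ℓ^{i}` is
injective on `ℤ/ℓ` and `k` is invertible, the values `θ^α_{a,k}` therefore determine `α`.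
-/

open Finset

namespace AddChar

variable {R : Type*} [CommRing R] [Fintype R] [DecidableEq R] {ψ : AddChar R ℂ}

lemma sum_mul_sum_mulShift_eq_ite (hψ : ψ.IsPrimitive) (T : Finset R) (f : R → ℂ) (t : R) :
    ∑ a, ψ (a * -t) * ∑ s ∈ T, ψ (a * s) * f s =
      if t ∈ T then Fintype.card R * f t else 0 := by
  calc ∑ a, ψ (a * -t) * ∑ s ∈ T, ψ (a * s) * f s
      = ∑ s ∈ T, (∑ a, ψ (a * (s - t))) * f s := by
        simp_rw [mul_sum, sum_mul]
        rw [sum_comm]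
        refine sum_congr rfl fun s _ => sum_congr rfl fun a _ => ?_
        rw [← mul_assoc, ← map_add_eq_mul, mul_neg, mul_sub, neg_add_eq_sub]
    _ = ∑ s ∈ T, if s = t then Fintype.card R * f s else 0 := by
        refine sum_congr rfl fun s _ => ?_
        by_cases hst : s = t <;> simp [sum_mulShift _ hψ, hst, sub_eq_zero]
    _ = if t ∈ T then Fintype.card R * f t else 0 := sum_ite_eq' T t _

lemma eqOn_of_forall_sum_mulShift_mul_eq (hψ : ψ.IsPrimitive) {T : Finset R} {f g : R → ℂ}
    (h : ∀ a, ∑ s ∈ T, ψ (a * s) * f s = ∑ s ∈ T, ψ (a * s) * g s) :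
    ∀ t ∈ T, f t = g t := by
  intro t ht
  have hcard : (Fintype.card R : ℂ) ≠ 0 := Nat.cast_ne_zero.2 Fintype.card_ne_zero
  refine mul_left_cancel₀ hcard ?_
  calc Fintype.card R * f t = ∑ a, ψ (a * -t) * ∑ s ∈ T, ψ (a * s) * f s := by
        rw [sum_mul_sum_mulShift_eq_ite hψ, if_pos ht]
    _ = ∑ a, ψ (a * -t) * ∑ s ∈ T, ψ (a * s) * g s := by simp_rw [h]
    _ = Fintype.card R * g t := by rw [sum_mul_sum_mulShift_eq_ite hψ, if_pos ht]

lemma isPrimitive_compAddMonoidHom_trace {K L M : Type*} [Field K] [Field L] [Algebra K L]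
    [FiniteDimensional K L] [Algebra.IsSeparable K L] [CommMonoid M] {φ : AddChar K M}
    (hφ : φ ≠ 1) : (φ.compAddMonoidHom (Algebra.trace K L).toAddMonoidHom).IsPrimitive := by
  refine IsPrimitive.of_ne_one (ne_one_iff.2 ?_)
  obtain ⟨b, hb⟩ := ne_one_iff.1 hφ
  obtain ⟨x, rfl⟩ := Algebra.trace_surjective K L b
  exact ⟨x, hb⟩

end AddChar

lemma ZMod.stdAddChar_apply_eq_pow {N : ℕ} [NeZero N] (j : ZMod N) :
    stdAddChar j = Complex.exp (2 * Real.pi * Complex.I / N) ^ j.val := by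
  rw [stdAddChar_apply, toCircle_apply, ← Complex.exp_nat_mul]
  ring_nf

lemma ZMod.stdAddChar_ne_one {N : ℕ} [NeZero N] [Nontrivial (ZMod N)] :
    (stdAddChar : AddChar (ZMod N) ℂ) ≠ 1 := by
  simpa using isPrimitive_stdAddChar N one_ne_zero

theorem voltage_determined_by_eigenvalues_general
    (p ℓ : ℕ) [Fact p.Prime] [Fact ℓ.Prime]
    (F : Type*) [Field F] [Fintype F] [DecidableEq F] [Algebra (ZMod p) F]
    (α β : F → ZMod ℓ)
    (k : ZMod ℓ) (hk : k ≠ 0)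
    (heq : ∀ a : F,
      (∑ s ∈ Finset.univ.filter (fun s : F => s ≠ 0 ∧ ∃ z : F, z ^ 2 = s),
        Complex.exp (2 * Real.pi * Complex.I / p) ^ (Algebra.trace (ZMod p) F (a * s)).val
          * Complex.exp (2 * Real.pi * Complex.I / ℓ) ^ (k * α s).val)
      = ∑ s ∈ Finset.univ.filter (fun s : F => s ≠ 0 ∧ ∃ z : F, z ^ 2 = s),
        Complex.exp (2 * Real.pi * Complex.I / p) ^ (Algebra.trace (ZMod p) F (a * s)).val
          * Complex.exp (2 * Real.pi * Complex.I / ℓ) ^ (k * β s).val) :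
    ∀ s : F, s ≠ 0 → (∃ z : F, z ^ 2 = s) → α s = β s := by
  have : FiniteDimensional (ZMod p) F := Module.Finite.of_finite
  set ψ := (ZMod.stdAddChar (N := p)).compAddMonoidHom (Algebra.trace (ZMod p) F).toAddMonoidHom
  have hψ : ψ.IsPrimitive := AddChar.isPrimitive_compAddMonoidHom_trace ZMod.stdAddChar_ne_one
  simp_rw [← ZMod.stdAddChar_apply_eq_pow] at heq
  have hvalues := AddChar.eqOn_of_forall_sum_mulShift_mul_eq hψ heq
  intro s hs hsq
  have hχs := hvalues s (mem_filter.2 ⟨mem_univ s, hs, hsq⟩)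
  exact mul_left_cancel₀ hk (ZMod.injective_stdAddChar hχs)

/-- Fourier inversion: if `k ≠ 0` in `ℤ/ℓ` and two voltage assignments `α, β` satisfy
`θ^α_{a,k} = θ^β_{a,k}` for all `a ∈ F_q`, then `α = β` (on the nonzero squares). -/
theorem voltage_determined_by_eigenvalues
    (p ℓ : ℕ) [Fact p.Prime] [Fact ℓ.Prime] (hpl : ℓ ≠ p)
    (F : Type*) [Field F] [Fintype F] [DecidableEq F] [Algebra (ZMod p) F]
    (h4 : Fintype.card F % 4 = 1)
    (α β : F → ZMod ℓ)
    (hαodd : ∀ s : F, s ≠ 0 → (∃ z : F, z ^ 2 = s) → α (-s) = -α s)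
    (hβodd : ∀ s : F, s ≠ 0 → (∃ z : F, z ^ 2 = s) → β (-s) = -β s)
    (k : ZMod ℓ) (hk : k ≠ 0)
    (heq : ∀ a : F,
      (∑ s ∈ Finset.univ.filter (fun s : F => s ≠ 0 ∧ ∃ z : F, z ^ 2 = s),
        Complex.exp (2 * Real.pi * Complex.I / p) ^ (Algebra.trace (ZMod p) F (a * s)).val
          * Complex.exp (2 * Real.pi * Complex.I / ℓ) ^ (k * α s).val)
      = ∑ s ∈ Finset.univ.filter (fun s : F => s ≠ 0 ∧ ∃ z : F, z ^ 2 = s),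
        Complex.exp (2 * Real.pi * Complex.I / p) ^ (Algebra.trace (ZMod p) F (a * s)).val
          * Complex.exp (2 * Real.pi * Complex.I / ℓ) ^ (k * β s).val) :
    ∀ s : F, s ≠ 0 → (∃ z : F, z ^ 2 = s) → α s = β s :=
  voltage_determined_by_eigenvalues_general p ℓ F α β k hk heq
end

section
/- Let p ≡ 1 (mod 4) be prime and ℓ ≠ p a prime. If (√p − 1)/2 ≡ (p − 1)/2 (mod ℓ·ℤ[ζ_p]) then ℓ divides (p − 1)/2 in ℤ. -/
open Polynomial

lemma sum_aeval_pow_int (p : ℕ) {ζ : ℂ} (hζ : IsPrimitiveRoot ζ p) (f : ℤ[X]) :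
    ∃ n : ℤ, ∑ u ∈ Finset.range p, Polynomial.aeval (ζ ^ u) f = (n : ℂ) := by
  induction f using Polynomial.induction_on' with
  | add f g hf hg =>
    obtain ⟨n, hn⟩ := hf; obtain ⟨m, hm⟩ := hg
    exact ⟨n + m, by push_cast [map_add, Finset.sum_add_distrib, hn, hm]; ring⟩
  | monomial i a =>
    refine ⟨if p ∣ i then a * p else 0, ?_⟩
    have key : ∑ u ∈ Finset.range p, (ζ ^ i) ^ u = if p ∣ i then (p : ℂ) else 0 := by
      by_cases hdvd : p ∣ i
      · have h1 : ζ ^ i = 1 := by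
          obtain ⟨k, rfl⟩ := hdvd
          rw [pow_mul, hζ.pow_eq_one, one_pow]
        simp [h1, hdvd]
      · have hne : ζ ^ i ≠ 1 := fun hh => hdvd ((hζ.pow_eq_one_iff_dvd i).mp hh)
        rw [geom_sum_eq hne, if_neg hdvd]
        have h1 : (ζ ^ i) ^ p = 1 := by
          rw [← pow_mul, mul_comm, pow_mul, hζ.pow_eq_one, one_pow]
        rw [h1]; simp
    calc ∑ u ∈ Finset.range p, Polynomial.aeval (ζ ^ u) (monomial i a)
        = (a : ℂ) * ∑ u ∈ Finset.range p, (ζ ^ i) ^ u := by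
          rw [Finset.mul_sum]
          refine Finset.sum_congr rfl fun u _ => ?_
          rw [aeval_monomial, ← pow_mul, ← pow_mul, mul_comm u i]
          simp
      _ = _ := by rw [key]; split <;> push_cast <;> ring

/-- For primes `p ≡ 1 (mod 4)` and `ℓ ≠ p`: if `(√p - 1)/2 ≡ (p - 1)/2 (mod ℓ·ℤ[ζ_p])`,
then `ℓ` divides `(p - 1)/2` in `ℤ`. -/
theorem ell_divides_of_congruence
    (p ℓ : ℕ) (hp : p.Prime) (hl : ℓ.Prime) (h4 : p % 4 = 1) (hne : ℓ ≠ p)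
    (h : ∃ z ∈ Algebra.adjoin ℤ ({Complex.exp (2 * Real.pi * Complex.I / p)} : Set ℂ),
      ((Real.sqrt p - 1) / 2 : ℂ) - (((p : ℂ) - 1) / 2) = (ℓ : ℂ) * z) :
    ℓ ∣ (p - 1) / 2 := by
  obtain ⟨z, hzmem, heq⟩ := h
  set ζ : ℂ := Complex.exp (2 * Real.pi * Complex.I / p) with hζdef
  have hppos : 0 < p := hp.pos
  have hζ : IsPrimitiveRoot ζ p := Complex.isPrimitiveRoot_exp p hp.ne_zero
  rw [Algebra.adjoin_singleton_eq_range_aeval] at hzmem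
  obtain ⟨g, hg0⟩ := hzmem
  have hg : Polynomial.aeval ζ g = z := hg0
  have hsqrt : ((Real.sqrt p : ℝ) : ℂ) = 2 * ℓ * z + p := by
    linear_combination 2 * heq
  set s : ℂ := ((Real.sqrt p : ℝ) : ℂ) with hs
  have hs2 : s ^ 2 = (p : ℂ) := by
    rw [hs, ← Complex.ofReal_pow, Real.sq_sqrt (by positivity : (0:ℝ) ≤ (p:ℝ))]
    norm_num
  set q : ℤ[X] := C (2 * (ℓ : ℤ)) * g + C (p : ℤ) with hq
  set P : ℤ[X] := q ^ 2 - C (p : ℤ) with hP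
  have haevalq : Polynomial.aeval ζ q = 2 * ℓ * z + p := by
    rw [hq, map_add, map_mul, aeval_C, aeval_C, hg, algebraMap_int_eq]
    simp only [eq_intCast]
    push_cast
    ring
  have haevalP : Polynomial.aeval ζ P = 0 := by
    rw [hP, map_sub, map_pow, haevalq, aeval_C, ← hsqrt, algebraMap_int_eq]
    simp only [eq_intCast]
    push_cast
    linear_combination hs2
  have hmin : minpoly ℤ ζ ∣ P :=
    minpoly.isIntegrallyClosed_dvd (hζ.isIntegral hppos) haevalP
  rw [← Polynomial.cyclotomic_eq_minpoly hζ hppos] at hmin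
  obtain ⟨Q, hQ⟩ := hmin
  -- each conjugate value is ±√p
  have hroot : ∀ u ∈ Finset.Ico 1 p, (Polynomial.aeval (ζ ^ u) q) ^ 2 = (p : ℂ) := by
    intro u hu
    rw [Finset.mem_Ico] at hu
    have hcop : Nat.Coprime u p :=
      (hp.coprime_iff_not_dvd.mpr (Nat.not_dvd_of_pos_of_lt (by omega) hu.2)).symm
    have hζu : IsPrimitiveRoot (ζ ^ u) p := hζ.pow_of_coprime u hcop
    have hcyc : Polynomial.aeval (ζ ^ u) (cyclotomic p ℤ) = 0 := by
      rw [Polynomial.cyclotomic_eq_minpoly hζu hppos]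
      exact minpoly.aeval ℤ (ζ ^ u)
    have hPz : Polynomial.aeval (ζ ^ u) P = 0 := by
      rw [hQ, map_mul, hcyc, zero_mul]
    have := hPz
    rw [hP, map_sub, map_pow, aeval_C] at this
    have h2 : (Polynomial.aeval (ζ ^ u) q) ^ 2 = algebraMap ℤ ℂ (p : ℤ) := by
      linear_combination this
    simpa using h2
  -- sign function
  set w : ℕ → ℂ := fun u => Polynomial.aeval (ζ ^ u) q with hw
  set ε : ℕ → ℤ := fun u => if w u = s then 1 else -1 with hε
  have hws : ∀ u ∈ Finset.Ico 1 p, w u = (ε u : ℂ) * s := by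
    intro u hu
    have hsq := hroot u hu
    have h2 : (w u - s) * (w u + s) = 0 := by
      simp only [hw]
      linear_combination hsq - hs2
    by_cases h5 : w u = s
    · have hε1 : ε u = 1 := by simp only [hε, if_pos h5]
      rw [hε1, h5]; push_cast; ring
    · have hε4 : w u = -s := by
        rcases mul_eq_zero.mp h2 with h3 | h3
        · exact absurd (by linear_combination h3) h5
        · linear_combination h3
      have hε1 : ε u = -1 := by simp only [hε, if_neg h5]
      rw [hε1, hε4]; push_cast; ring
  -- the integer value of the sum
  obtain ⟨A, hA⟩ := sum_aeval_pow_int p hζ g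
  have hpeel : ∑ u ∈ Finset.range p, Polynomial.aeval (ζ ^ u) g
      = Polynomial.aeval ((1:ℂ)) g + ∑ u ∈ Finset.Ico 1 p, Polynomial.aeval (ζ ^ u) g := by
    rw [Finset.range_eq_Ico, Finset.sum_eq_sum_Ico_succ_bot hppos]
    simp
  have haeval1 : Polynomial.aeval ((1:ℂ)) g = ((g.eval 1 : ℤ) : ℂ) := by
    rw [aeval_def, eval₂_eq_eval_map, Polynomial.eval_one_map]
    simp
  -- S in two ways
  have hS1 : ∑ u ∈ Finset.Ico 1 p, w u
      = ((2 * ℓ * (A - g.eval 1) + p * (p - 1) : ℤ) : ℂ) := by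
    have hZ : ∑ u ∈ Finset.Ico 1 p, Polynomial.aeval (ζ ^ u) g = ((A - g.eval 1 : ℤ) : ℂ) := by
      push_cast
      rw [← hA, hpeel, haeval1]
      ring
    have hcard : (Finset.Ico 1 p).card = p - 1 := by
      rw [Nat.card_Ico]
    calc ∑ u ∈ Finset.Ico 1 p, w u
        = ∑ u ∈ Finset.Ico 1 p, (2 * (ℓ:ℂ) * Polynomial.aeval (ζ ^ u) g + p) := by
          refine Finset.sum_congr rfl fun u _ => ?_
          simp only [hw]
          rw [hq, map_add, map_mul, aeval_C, aeval_C, algebraMap_int_eq]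
          simp only [eq_intCast]
          push_cast
          ring
      _ = 2 * (ℓ:ℂ) * ∑ u ∈ Finset.Ico 1 p, Polynomial.aeval (ζ ^ u) g
            + (Finset.Ico 1 p).card * (p:ℂ) := by
          rw [Finset.sum_add_distrib, Finset.mul_sum, Finset.sum_const]
          simp [mul_comm]
      _ = _ := by
          rw [hZ, hcard, Nat.cast_sub hppos]
          push_cast
          ring
  have hS2 : ∑ u ∈ Finset.Ico 1 p, w u = ((∑ u ∈ Finset.Ico 1 p, ε u : ℤ) : ℂ) * s := by
    push_cast
    rw [Finset.sum_mul]
    exact Finset.sum_congr rfl hws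
  set M : ℤ := ∑ u ∈ Finset.Ico 1 p, ε u with hM
  set N : ℤ := 2 * ℓ * (A - g.eval 1) + p * (p - 1) with hN
  have hMN : (M : ℂ) * s = (N : ℂ) := by rw [← hS2, hS1]
  -- M must be zero by irrationality of √p
  have hM0 : M = 0 := by
    by_contra hM0
    have hreal : (M : ℝ) * Real.sqrt p = (N : ℝ) := by
      have := hMN
      rw [hs] at this
      exact_mod_cast this
    have hrat : Real.sqrt p = ((N / M : ℚ) : ℝ) := by
      have hMne : (M : ℝ) ≠ 0 := Int.cast_ne_zero.mpr hM0
      push_cast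
      field_simp
      linarith [hreal]
    exact hp.irrational_sqrt ⟨(N / M : ℚ), hrat.symm⟩
  have hN0 : N = 0 := by
    have := hMN
    rw [hM0] at this
    exact_mod_cast (by simpa using this.symm : (N : ℂ) = 0)
  -- conclude
  set m : ℕ := (p - 1) / 2 with hm
  have hm2 : (p : ℤ) - 1 = 2 * m := by
    have h1 : 1 ≤ p := hppos
    omega
  have hdvd : (ℓ : ℤ) ∣ (p : ℤ) * (m : ℤ) := by
    refine ⟨-(A - g.eval 1), ?_⟩
    have : 2 * (ℓ:ℤ) * (A - g.eval 1) + p * (2 * m) = 0 := by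
      rw [← hm2]; rw [hN] at hN0; linarith [hN0]
    linarith [this]
  have hlint : Prime (ℓ : ℤ) := Int.prime_iff_natAbs_prime.mpr (by simpa using hl)
  rcases hlint.dvd_mul.mp hdvd with h1 | h1
  · exfalso
    have : ℓ ∣ p := Int.natCast_dvd_natCast.mp h1
    exact hne ((Nat.prime_dvd_prime_iff_eq hl hp).mp this)
  · exact Int.natCast_dvd_natCast.mp h1
end

section
/- Let f : F_q → F_q be a bijection given by a polynomial of odd degree with f(−a) = −f(a) for all a, and define the F_q × F_q complex matrix M by M_{x,y} = (1/q) ∑_{a ∈ F_q} ζ_p^{tr(f(a)y − ax)}. Then M is a real orthogonal matrix: M M^⊤ = I. -/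
/-!
Put `ψ s = ζ_p ^ tr s`; since the trace is onto `𝔽_p`, `ψ` is a primitive additive character
of `𝔽_q`. Expanding, `(M Mᵀ)_{x,z} = q⁻² ∑_{a,b} ψ(-ax - bz) ∑_y ψ(y (f a + f b))`, and by
orthogonality the inner sum is `q` if `f a + f b = 0` and `0` otherwise. As `f` is odd and
injective, this happens exactly when `b = -a`, leaving `q⁻¹ ∑_a ψ(a (z - x)) = δ_{x,z}`.
The entries are real because `conj (ψ s) = ψ (-s)`, and the substitution `a ↦ -a` together
with the oddness of `f` turns the conjugate of `M_{x,y}` back into `M_{x,y}`.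
-/

open Finset Function Matrix

theorem Function.Injective.add_eq_zero_iff_eq_neg_of_odd {G : Type*} [AddGroup G] {f : G → G}
    (hf : Injective f) (hodd : ∀ a, f (-a) = -f a) {a b : G} : f a + f b = 0 ↔ b = -a := by
  rw [add_eq_zero_iff_neg_eq', ← hodd, hf.eq_iff, neg_eq_iff_eq_neg]

namespace AddChar

theorem IsPrimitive.compAddMonoidHom_trace {K L R' : Type*} [Field K] [Field L] [Algebra K L]
    [FiniteDimensional K L] [Algebra.IsSeparable K L] [CommMonoid R'] {ψ : AddChar K R'}
    (hψ : ψ.IsPrimitive) :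
    (ψ.compAddMonoidHom (Algebra.trace K L).toAddMonoidHom).IsPrimitive := by
  refine IsPrimitive.of_ne_one fun h ↦ hψ one_ne_zero ?_
  ext x
  obtain ⟨b, rfl⟩ := Algebra.trace_surjective K L x
  simpa using DFunLike.congr_fun h b

variable {R : Type*} [CommRing R] [Fintype R]

/-- The matrix `M` of the statement, with an arbitrary additive character `ψ` in place of
`s ↦ ζ_p ^ tr s`. -/
noncomputable def twistedFourierMatrix (ψ : AddChar R ℂ) (f : R → R) : Matrix R R ℂ :=
  Matrix.of fun x y ↦ (Fintype.card R : ℂ)⁻¹ * ∑ a, ψ (f a * y - a * x)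

theorem conj_twistedFourierMatrix_apply (ψ : AddChar R ℂ) {f : R → R}
    (hodd : ∀ a, f (-a) = -f a) (x y : R) :
    starRingEnd ℂ (twistedFourierMatrix ψ f x y) = twistedFourierMatrix ψ f x y := by
  simp only [twistedFourierMatrix, Matrix.of_apply, map_mul, map_inv₀, Complex.conj_natCast,
    map_sum, ← map_neg_eq_conj]
  congr 1
  refine Fintype.sum_equiv (Equiv.neg R) _ _ fun a ↦ ?_
  simp only [Equiv.neg_apply, hodd]
  ring_nf

theorem im_twistedFourierMatrix_apply (ψ : AddChar R ℂ) {f : R → R}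
    (hodd : ∀ a, f (-a) = -f a) (x y : R) : (twistedFourierMatrix ψ f x y).im = 0 :=
  Complex.conj_eq_iff_im.mp (conj_twistedFourierMatrix_apply ψ hodd x y)

theorem twistedFourierMatrix_mul_transpose [DecidableEq R] {ψ : AddChar R ℂ}
    (hψ : ψ.IsPrimitive) {f : R → R} (hf : Injective f) (hodd : ∀ a, f (-a) = -f a) :
    twistedFourierMatrix ψ f * (twistedFourierMatrix ψ f)ᵀ = 1 := by
  ext x z
  have hq : (Fintype.card R : ℂ) ≠ 0 := Nat.cast_ne_zero.2 Fintype.card_ne_zero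
  have hsplit : ∀ a b y, ψ (f a * y - a * x) * ψ (f b * y - b * z)
      = ψ (-(a * x) - b * z) * ψ (y * (f a + f b)) := fun a b y ↦ by
    rw [← map_add_eq_mul, ← map_add_eq_mul]
    ring_nf
  calc ∑ y, twistedFourierMatrix ψ f x y * twistedFourierMatrix ψ f z y
      = (Fintype.card R : ℂ)⁻¹ * (Fintype.card R : ℂ)⁻¹ *
          ∑ a, ∑ b, ψ (-(a * x) - b * z) * ∑ y, ψ (y * (f a + f b)) := by
        simp only [twistedFourierMatrix, Matrix.of_apply, mul_mul_mul_comm, sum_mul_sum,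
          ← mul_sum, hsplit]
        rw [sum_comm]
        simp only [mul_sum]
        exact sum_congr rfl fun _ _ ↦ sum_comm
    _ = (Fintype.card R : ℂ)⁻¹ * (Fintype.card R : ℂ)⁻¹ *
          ∑ a, ψ (-(a * x) - -a * z) * Fintype.card R := by
        simp only [sum_mulShift _ hψ, hf.add_eq_zero_iff_eq_neg_of_odd hodd, Nat.cast_ite,
          Nat.cast_zero, mul_ite, mul_zero, sum_ite_eq', mem_univ, if_true]
    _ = (Fintype.card R : ℂ)⁻¹ * ∑ a, ψ (a * (z - x)) := by
        rw [← sum_mul, mul_comm _ (Fintype.card R : ℂ), mul_assoc, inv_mul_cancel_left₀ hq]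
        simp only [neg_mul, sub_neg_eq_add, neg_add_eq_sub, ← mul_sub]
    _ = (1 : Matrix R R ℂ) x z := by
        simp only [sum_mulShift _ hψ, Matrix.one_apply, sub_eq_zero, eq_comm (a := z)]
        split_ifs <;> simp [hq]

end AddChar

theorem matrix_M_is_real_orthogonal_general
    (p : ℕ) [Fact p.Prime]
    (F : Type*) [Field F] [Fintype F] [DecidableEq F] [Algebra (ZMod p) F]
    (f : F → F) (hf : Function.Bijective f) (hodd : ∀ a : F, f (-a) = -f a) :
    letI ζ : ℂ := Complex.exp (2 * Real.pi * Complex.I / p)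
    letI M : Matrix F F ℂ := fun x y => (1 / (Fintype.card F : ℂ)) *
      ∑ a : F, ζ ^ (Algebra.trace (ZMod p) F (f a * y - a * x)).val
    M * M.transpose = 1 ∧ ∀ x y : F, (M x y).im = 0 := by
  have hζ : IsPrimitiveRoot (Complex.exp (2 * Real.pi * Complex.I / p)) p :=
    Complex.isPrimitiveRoot_exp p (NeZero.ne p)
  let ψ : AddChar F ℂ :=
    (AddChar.zmodChar p hζ.pow_eq_one).compAddMonoidHom (Algebra.trace (ZMod p) F).toAddMonoidHom
  have hψ : ψ.IsPrimitive :=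
    (AddChar.zmodChar_primitive_of_primitive_root p hζ).compAddMonoidHom_trace
  simp only [one_div]
  exact ⟨AddChar.twistedFourierMatrix_mul_transpose hψ hf.injective hodd,
    AddChar.im_twistedFourierMatrix_apply ψ hodd⟩

/-- For an odd permutation polynomial bijection `f` of `F_q`, the matrix
`M_{x,y} = (1/q) ∑_a ζ_p^{tr(f(a)y - ax)}` is a real orthogonal matrix. -/
theorem matrix_M_is_real_orthogonal
    (p : ℕ) [Fact p.Prime]
    (F : Type*) [Field F] [Fintype F] [DecidableEq F] [Algebra (ZMod p) F]
    (f : F → F) (hf : Function.Bijective f) (hodd : ∀ a : F, f (-a) = -f a)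
    (P : Polynomial F) (hdeg : Odd P.natDegree) (hP : ∀ x : F, P.eval x = f x) :
    letI ζ : ℂ := Complex.exp (2 * Real.pi * Complex.I / p)
    letI M : Matrix F F ℂ := fun x y => (1 / (Fintype.card F : ℂ)) *
      ∑ a : F, ζ ^ (Algebra.trace (ZMod p) F (f a * y - a * x)).val
    M * M.transpose = 1 ∧ ∀ x y : F, (M x y).im = 0 :=
  matrix_M_is_real_orthogonal_general p F f hf hodd
end

section
/- Let f : F_q → F_q be an odd bijection (f(−a) = −f(a)) and M_{x,y} = (1/q) ∑_{a} ζ_p^{tr(f(a)y − ax)}. Then for each t ∈ F_q, the matrix M R^t M^⊤ equals ∑_{a ∈ F_q} M_{a,t} R^a, where R^t is the F_q-circulant cycle matrix with (R^t)_{x,y} = 1 iff y − x = t; in particular M R^t M^⊤ is F_q-circulant. -/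
/-!
Write `ψ` for the additive character `z ↦ ζ_p ^ tr z`. Expanding both factors,
`(M R^t Mᵀ)_{x,y} = ∑_u M_{x,u} M_{y,u+t}` becomes a triple sum over `u, a, b` in which the sum over
`u` is `∑_u ψ(u (f a + f b))`. As `ψ` is primitive, this vanishes unless `f a + f b = 0`, which for an
odd injective `f` means `a = -b`; what remains is `M_{y-x,t}`. An entry depending only on `y - x` is
exactly the `(x, y)` entry of `∑_a M_{a,t} R^a`, and is invariant under shifting `x` and `y` together.
-/

open Finset

def cycleMatrix (R : Type*) [Zero R] [One R] {G : Type*} [AddGroup G] [DecidableEq G]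
    (u : G) : Matrix G G R :=
  fun x y => if y - x = u then 1 else 0

section CycleMatrix

variable {R G : Type*} [NonAssocSemiring R] [AddCommGroup G] [Fintype G] [DecidableEq G]

theorem mul_cycleMatrix_apply {m : Type*} (A : Matrix m G R) (u : G) (x : m) (y : G) :
    (A * cycleMatrix R u) x y = A x (y - u) := by
  have hsolve : ∀ j, y - j = u ↔ y - u = j := fun j => by
    constructor <;> rintro rfl <;> exact sub_sub_cancel _ _
  simp [Matrix.mul_apply, cycleMatrix, hsolve]

theorem sum_smul_cycleMatrix_apply (c : G → R) (x y : G) :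
    (∑ a, c a • cycleMatrix R a) x y = c (y - x) := by
  simp [Matrix.sum_apply, cycleMatrix, eq_comm]

end CycleMatrix

section CharSumMatrix

variable {F K : Type*} [CommRing F] [Fintype F] [DecidableEq F] [Field K]

def charSumMatrix (ψ : AddChar F K) (f : F → F) : Matrix F F K :=
  fun x y => (1 / (Fintype.card F : K)) * ∑ a, ψ (f a * y - a * x)

variable {ψ : AddChar F K} {f : F → F}

theorem sum_addChar_mul_add_apply_eq_ite (hψ : ψ.IsPrimitive) (hf : f.Injective)
    (hodd : ∀ a, f (-a) = -f a) (a b : F) :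
    ∑ u, ψ (u * (f a + f b)) = if a = -b then (Fintype.card F : K) else 0 := by
  have hzero : f a + f b = 0 ↔ a = -b := by
    rw [add_eq_zero_iff_eq_neg, ← hodd, hf.eq_iff]
  rw [AddChar.sum_mulShift _ hψ, if_congr hzero rfl rfl, apply_ite Nat.cast, Nat.cast_zero]

theorem charSumMatrix_mul_cycleMatrix_mul_transpose_apply (hψ : ψ.IsPrimitive)
    (hf : f.Injective) (hodd : ∀ a, f (-a) = -f a) (t x y : F) :
    (charSumMatrix ψ f * cycleMatrix K t * (charSumMatrix ψ f).transpose) x y =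
      charSumMatrix ψ f (y - x) t := by
  set q : K := (Fintype.card F : K)
  have hprod : ∀ u, charSumMatrix ψ f x u * charSumMatrix ψ f y (u + t) =
      1 / q * (1 / q) * ∑ a, ∑ b, ψ (u * (f a + f b)) * ψ (f b * t - a * x - b * y) := by
    intro u
    rw [charSumMatrix, charSumMatrix, mul_mul_mul_comm, sum_mul_sum]
    congr 1
    refine sum_congr rfl fun a _ => sum_congr rfl fun b _ => ?_
    rw [← AddChar.map_add_eq_mul, ← AddChar.map_add_eq_mul]
    ring_nf
  calc (charSumMatrix ψ f * cycleMatrix K t * (charSumMatrix ψ f).transpose) x y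
      = ∑ u, charSumMatrix ψ f x u * charSumMatrix ψ f y (u + t) := by
        rw [Matrix.mul_apply]
        simp only [mul_cycleMatrix_apply, Matrix.transpose_apply]
        exact (Fintype.sum_equiv (Equiv.addRight t) _ _ fun u => by simp).symm
    _ = 1 / q * (1 / q) * ∑ a, ∑ b,
          (∑ u, ψ (u * (f a + f b))) * ψ (f b * t - a * x - b * y) := by
        simp only [hprod, ← mul_sum, sum_mul]
        rw [sum_comm]
        refine congrArg _ (sum_congr rfl fun a _ => sum_comm)
    _ = 1 / q * (1 / q) * ∑ b, q * ψ (f b * t - b * (y - x)) := by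
        simp only [sum_addChar_mul_add_apply_eq_ite hψ hf hodd, ite_mul, zero_mul]
        rw [sum_comm]
        simp only [sum_ite_eq', mem_univ, if_true]
        refine congrArg _ (sum_congr rfl fun b _ => ?_)
        congr 2
        ring
    _ = charSumMatrix ψ f (y - x) t := by
        have hq : 1 / q * (1 / q) * q = 1 / q := by
          rcases eq_or_ne q 0 with h | h <;> field_simp [h]
        rw [charSumMatrix, ← mul_sum, ← mul_assoc, hq]

end CharSumMatrix

section TraceAddChar

variable (p : ℕ) [Fact p.Prime] (F : Type*) [Field F] [Algebra (ZMod p) F]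

noncomputable def traceAddChar : AddChar F ℂ :=
  ZMod.stdAddChar.compAddMonoidHom (Algebra.trace (ZMod p) F).toAddMonoidHom

theorem traceAddChar_apply (z : F) :
    traceAddChar p F z =
      Complex.exp (2 * Real.pi * Complex.I / p) ^ (Algebra.trace (ZMod p) F z).val := by
  rw [traceAddChar, AddChar.compAddMonoidHom_apply, LinearMap.toAddMonoidHom_coe,
    ZMod.stdAddChar_apply, ZMod.toCircle_apply, ← Complex.exp_nat_mul]
  congr 1
  ring

theorem traceAddChar_isPrimitive [Finite F] : (traceAddChar p F).IsPrimitive := by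
  refine AddChar.IsPrimitive.of_ne_one fun h => ?_
  obtain ⟨b, hb⟩ := DFunLike.ne_iff.mp (Algebra.trace_ne_zero (ZMod p) F)
  have hψb := DFunLike.congr_fun h b
  rw [traceAddChar, AddChar.compAddMonoidHom_apply, AddChar.one_apply,
    ← (ZMod.stdAddChar (N := p)).map_zero_eq_one, ZMod.injective_stdAddChar.eq_iff] at hψb
  exact hb hψb

end TraceAddChar

/-- For an odd bijection `f` of `F_q` and
`M_{x,y} = (1/q) ∑_a ζ_p^{tr(f(a)y - ax)}`, the matrix `M R^t M^⊤` equals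
`∑_a M_{a,t} R^a`; in particular `M R^t M^⊤` is `F_q`-circulant. -/
theorem conjugated_cycle_matrix_is_circulant
    (p : ℕ) [Fact p.Prime]
    (F : Type*) [Field F] [Fintype F] [DecidableEq F] [Algebra (ZMod p) F]
    (f : F → F) (hf : Function.Bijective f) (hodd : ∀ a : F, f (-a) = -f a)
    (t : F) :
    letI ζ : ℂ := Complex.exp (2 * Real.pi * Complex.I / p)
    letI M : Matrix F F ℂ := fun x y => (1 / (Fintype.card F : ℂ)) *
      ∑ a : F, ζ ^ (Algebra.trace (ZMod p) F (f a * y - a * x)).val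
    letI R : F → Matrix F F ℂ := fun u => fun x y => if y - x = u then 1 else 0
    M * R t * M.transpose = ∑ a : F, M a t • R a ∧
    (∀ u x y : F, (M * R t * M.transpose) (x + u) (y + u) = (M * R t * M.transpose) x y) := by
  set M := charSumMatrix (traceAddChar p F) f with hM
  have hentry := charSumMatrix_mul_cycleMatrix_mul_transpose_apply
    (traceAddChar_isPrimitive p F) hf.injective hodd t
  have hsum : M * cycleMatrix ℂ t * M.transpose = ∑ a, M a t • cycleMatrix ℂ a :=
    Matrix.ext fun x y => by rw [hentry, sum_smul_cycleMatrix_apply]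
  have hcirc : ∀ u x y, (M * cycleMatrix ℂ t * M.transpose) (x + u) (y + u) =
      (M * cycleMatrix ℂ t * M.transpose) x y := fun u x y => by
    rw [hentry, hentry, add_sub_add_right_eq_sub]
  unfold charSumMatrix at hM
  simp only [hM, traceAddChar_apply] at hsum hcirc
  exact ⟨hsum, hcirc⟩
end

section
/- Let F_25 = F_5(ω) with ω² = 2, and let ℓ > 2 be prime. Define voltage assignments α, β : F_25^⊠ → ℤ/ℓ determined by α(1)=α(3)=α(ω+1)=1, α(3ω+3)=α(4ω+1)=α(2ω+3)=0, β(ω+1)=β(4ω+1)=β(2ω+3)=1, β(1)=β(3)=β(3ω+3)=0, extended by α(−s)=−α(s), β(−s)=−β(s). Then there exist no n ∈ (ℤ/ℓ)^×, t ∈ F_25^⊠, and σ ∈ Gal(F_25/F_5) such that n·α(s) = β(t·σ(s)) for all s ∈ F_25^⊠. -/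
instance aux_fact_prime_five : Fact (Nat.Prime 5) := ⟨by norm_num⟩

lemma aux_sqzmod : ∀ u : ZMod 5, u ^ 2 ≠ 2 := by decide

/-- Counterexample data over `F_25 = F_5(ω)`, `ω² = 2`: for the voltage assignments
`α, β` given in the table (extended by oddness), there are no `n ∈ (ℤ/ℓ)^×`,
`t ∈ F_25^⊠`, `σ ∈ Gal(F_25/F_5)` with `n·α(s) = β(t·σ(s))` for all nonzero
squares `s`. -/
theorem no_equivalence_of_counterexample_voltages
    (ℓ : ℕ) (hl : ℓ.Prime) (hl2 : 2 < ℓ) (hl5 : ℓ ≠ 5)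
    (F : Type*) [Field F] [Fintype F] (hcard : Fintype.card F = 25)
    (ω : F) (hω : ω ^ 2 = 2)
    (α β : F → ZMod ℓ)
    (hαodd : ∀ s : F, s ≠ 0 → (∃ z : F, z ^ 2 = s) → α (-s) = -α s)
    (hβodd : ∀ s : F, s ≠ 0 → (∃ z : F, z ^ 2 = s) → β (-s) = -β s)
    (hα1 : α 1 = 1) (hα2 : α 3 = 1) (hα3 : α (ω + 1) = 1)
    (hα4 : α (3 * ω + 3) = 0) (hα5 : α (4 * ω + 1) = 0) (hα6 : α (2 * ω + 3) = 0)
    (hβ1 : β 1 = 0) (hβ2 : β 3 = 0) (hβ3 : β (ω + 1) = 1)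
    (hβ4 : β (3 * ω + 3) = 0) (hβ5 : β (4 * ω + 1) = 1) (hβ6 : β (2 * ω + 3) = 1) :
    ¬ ∃ (n : ZMod ℓ) (t : F) (σ : F ≃+* F), IsUnit n ∧ t ≠ 0 ∧ (∃ z : F, z ^ 2 = t) ∧
      ∀ s : F, s ≠ 0 → (∃ z : F, z ^ 2 = s) → n * α s = β (t * σ s) := by
  classical
  rintro ⟨n, t, σ, hn, ht0, ⟨z, hz⟩, H⟩
  -- characteristic 5
  haveI : CharP F (ringChar F) := ringChar.charP F
  obtain ⟨m, hpprime, hcard'⟩ := FiniteField.card F (ringChar F)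
  have hp5 : ringChar F = 5 := by
    have hdvd : ringChar F ∣ 25 := by
      rw [hcard] at hcard'
      exact hcard' ▸ dvd_pow_self _ m.ne_zero
    have : ringChar F ∣ 5 := hpprime.dvd_of_dvd_pow (n := 2) (by norm_num [hdvd])
    exact (Nat.prime_dvd_prime_iff_eq hpprime (by norm_num)).mp this
  haveI : CharP F 5 := hp5 ▸ ‹CharP F (ringChar F)›
  have h5 : (5 : F) = 0 := by exact_mod_cast CharP.cast_eq_zero F 5
  -- prime field embedding
  set ψ : ZMod 5 →+* F := ZMod.castHom (dvd_refl 5) F with hψdef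
  have hψinj : Function.Injective ψ := ψ.injective
  have hψ0 : ψ 0 = 0 := map_zero ψ
  have hψ1 : ψ 1 = 1 := map_one ψ
  have hψ2 : ψ 2 = 2 := map_ofNat ψ 2
  have hψ3 : ψ 3 = 3 := map_ofNat ψ 3
  have hψ4 : ψ 4 = 4 := map_ofNat ψ 4
  -- coordinate map
  set e : ZMod 5 × ZMod 5 → F := fun p => ψ p.1 * ω + ψ p.2 with hedef
  have he : Function.Injective e := by
    rintro ⟨a, b⟩ ⟨c, d⟩ h
    simp only [hedef] at h
    by_cases hac : a = c
    · subst hac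
      have hbd : ψ b = ψ d := by linear_combination h
      obtain rfl : b = d := hψinj hbd
      rfl
    · exfalso
      have hne : ψ (a - c) ≠ 0 := fun hh => hac (by
        have := hψinj (hh.trans hψ0.symm)
        exact sub_eq_zero.mp this)
      have hωeq : ω = ψ ((d - b) / (a - c)) := by
        rw [map_div₀, eq_div_iff hne, map_sub, map_sub]
        linear_combination h
      have : ψ (((d - b) / (a - c)) ^ 2) = ψ 2 := by
        rw [map_pow, ← hωeq, hω, hψ2]
      exact aux_sqzmod _ (hψinj this)
  have hNZ : ∀ a b : ZMod 5, (a, b) ≠ ((0 : ZMod 5), (0 : ZMod 5)) →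
      ψ a * ω + ψ b ≠ 0 := by
    intro a b hab h
    apply hab
    apply he
    simp only [hedef, hψ0]
    simpa using h
  -- nonzero facts
  have hω1ne : ω + 1 ≠ 0 := by
    have h' := hNZ 1 1 (by decide)
    simpa [hψ1] using h'
  have h3ne : (3 : F) ≠ 0 := by
    have h' := hNZ 0 3 (by decide)
    simpa [hψ0, hψ3] using h'
  have h33ne : 3 * ω + 3 ≠ 0 := by
    have h' := hNZ 3 3 (by decide)
    simpa [hψ3] using h'
  have h23ne : 2 * ω + 3 ≠ 0 := by
    have h' := hNZ 2 3 (by decide)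
    simpa [hψ2, hψ3] using h'
  have h41ne : 4 * ω + 1 ≠ 0 := by
    have h' := hNZ 4 1 (by decide)
    simpa [hψ4, hψ1] using h'
  -- square witnesses
  have hsq3 : (2 * ω) ^ 2 = (3 : F) := by linear_combination 4 * hω + h5
  have hsqω1 : (ω + 3) ^ 2 = ω + 1 := by linear_combination hω + (ω + 2) * h5
  have hsq33 : (ω + 4) ^ 2 = 3 * ω + 3 := by linear_combination hω + (ω + 3) * h5
  have hsq23 : (4 * ω + 4) ^ 2 = 2 * ω + 3 := by
    linear_combination 16 * hω + (6 * ω + 9) * h5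
  have hsq41 : (ω + 2) ^ 2 = 4 * ω + 1 := by linear_combination hω + h5
  -- derived β values
  have hβ2' : β (2 : F) = 0 := by
    have h := hβodd 3 h3ne ⟨2 * ω, hsq3⟩
    rw [hβ2, neg_zero] at h
    rw [show (2 : F) = -3 by linear_combination h5]
    exact h
  have hβ4' : β (4 : F) = 0 := by
    have h := hβodd 1 one_ne_zero ⟨1, one_pow 2⟩
    rw [hβ1, neg_zero] at h
    rw [show (4 : F) = -1 by linear_combination h5]
    exact h
  have hβ22 : β (2 * ω + 2) = 0 := by
    have h := hβodd (3 * ω + 3) h33ne ⟨ω + 4, hsq33⟩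
    rw [hβ4, neg_zero] at h
    rw [show (2 * ω + 2 : F) = -(3 * ω + 3) by linear_combination (ω + 1) * h5]
    exact h
  have hβ44 : β (4 * ω + 4) = -1 := by
    have h := hβodd (ω + 1) hω1ne ⟨ω + 3, hsqω1⟩
    rw [hβ3] at h
    rw [show (4 * ω + 4 : F) = -(ω + 1) by linear_combination (ω + 1) * h5]
    exact h
  have hβ32 : β (3 * ω + 2) = -1 := by
    have h := hβodd (2 * ω + 3) h23ne ⟨4 * ω + 4, hsq23⟩
    rw [hβ6] at h
    rw [show (3 * ω + 2 : F) = -(2 * ω + 3) by linear_combination (ω + 1) * h5]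
    exact h
  have hβ14 : β (ω + 4) = -1 := by
    have h := hβodd (4 * ω + 1) h41ne ⟨ω + 2, hsq41⟩
    rw [hβ5] at h
    rw [show (ω + 4 : F) = -(4 * ω + 1) by linear_combination (ω + 1) * h5]
    exact h
  -- classification of σ
  have hσω : σ ω = ω ∨ σ ω = -ω := by
    have h2 : (σ ω) ^ 2 = 2 := by rw [← map_pow, hω]; exact map_ofNat σ 2
    have hfac : (σ ω - ω) * (σ ω + ω) = 0 := by linear_combination h2 - hω
    rcases mul_eq_zero.1 hfac with h | h
    · exact Or.inl (sub_eq_zero.1 h)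
    · exact Or.inr (eq_neg_of_add_eq_zero_left h)
  -- classification of t : the 12 nonzero squares
  set T : Finset F := Finset.univ.erase 0 with hTdef
  have hTcard : T.card = 24 := by
    rw [hTdef, Finset.card_erase_of_mem (Finset.mem_univ 0), Finset.card_univ, hcard]
  set I : Finset F := T.image (fun w : F => w ^ 2) with hIdef
  have hfib : ∀ s ∈ I, 2 ≤ (T.filter (fun w => w ^ 2 = s)).card := by
    intro s hs
    obtain ⟨w, hwT, hws⟩ := Finset.mem_image.1 hs
    have hw0 : w ≠ 0 := (Finset.mem_erase.1 hwT).1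
    have hwne : w ≠ -w := by
      intro hww
      have h2w : (2 : F) * w = 0 := by linear_combination hww
      rcases mul_eq_zero.1 h2w with h2 | h0
      · have h02 := hNZ 0 2 (by decide)
        exact h02 (by rw [hψ0, hψ2]; simpa using h2)
      · exact hw0 h0
    have hsub : ({w, -w} : Finset F) ⊆ T.filter (fun u => u ^ 2 = s) := by
      intro u hu
      rcases Finset.mem_insert.1 hu with rfl | hu
      · exact Finset.mem_filter.2 ⟨hwT, hws⟩
      · rw [Finset.mem_singleton.1 hu]
        refine Finset.mem_filter.2 ⟨Finset.mem_erase.2 ⟨neg_ne_zero.2 hw0, Finset.mem_univ _⟩, ?_⟩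
        rw [show (-w) ^ 2 = w ^ 2 by ring]
        exact hws
    calc (2 : ℕ) = ({w, -w} : Finset F).card := by
          rw [Finset.card_insert_of_notMem (by simpa using hwne), Finset.card_singleton]
      _ ≤ _ := Finset.card_le_card hsub
  have hsum := Finset.card_eq_sum_card_fiberwise
    (f := fun w : F => w ^ 2) (s := T) (t := I)
    (fun x hx => Finset.mem_image_of_mem _ hx)
  have h2I : 2 * I.card ≤ 24 := by
    rw [← hTcard, hsum]
    calc 2 * I.card = ∑ _s ∈ I, 2 := by rw [Finset.sum_const, smul_eq_mul, mul_comm]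
      _ ≤ _ := Finset.sum_le_sum hfib
  have hIcard : I.card ≤ 12 := by omega
  -- the 12 explicit squares
  have hQI : (({(0,1),(0,2),(0,3),(0,4),(1,1),(2,2),(3,3),(4,4),(4,1),(3,2),(2,3),(1,4)} :
      Finset (ZMod 5 × ZMod 5)).image e) ⊆ I := by
    intro x hx
    obtain ⟨p, hp, rfl⟩ := Finset.mem_image.1 hx
    fin_cases hp
    · exact Finset.mem_image.2 ⟨1, Finset.mem_erase.2 ⟨one_ne_zero, Finset.mem_univ _⟩,
        by simp only [hedef, hψ0, hψ1]; ring⟩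
    · exact Finset.mem_image.2 ⟨ω, Finset.mem_erase.2 ⟨by
          have h' := hNZ 1 0 (by decide)
          simpa [hψ1, hψ0] using h', Finset.mem_univ _⟩,
        by simp only [hedef, hψ0, hψ2]; linear_combination hω⟩
    · exact Finset.mem_image.2 ⟨2 * ω, Finset.mem_erase.2 ⟨by
          have h' := hNZ 2 0 (by decide)
          simpa [hψ2, hψ0] using h', Finset.mem_univ _⟩,
        by simp only [hedef, hψ0, hψ3]; linear_combination 4 * hω + h5⟩
    · exact Finset.mem_image.2 ⟨2, Finset.mem_erase.2 ⟨by
          have h' := hNZ 0 2 (by decide)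
          simpa [hψ2, hψ0] using h', Finset.mem_univ _⟩,
        by simp only [hedef, hψ0, hψ4]; norm_num⟩
    · exact Finset.mem_image.2 ⟨ω + 3, Finset.mem_erase.2 ⟨by
          have h' := hNZ 1 3 (by decide)
          simpa [hψ1, hψ3] using h', Finset.mem_univ _⟩,
        by simp only [hedef, hψ1]; linear_combination hω + (ω + 2) * h5⟩
    · exact Finset.mem_image.2 ⟨3 * ω + 2, Finset.mem_erase.2 ⟨by
          have h' := hNZ 3 2 (by decide)
          simpa [hψ3, hψ2] using h', Finset.mem_univ _⟩,
        by simp only [hedef, hψ2]; linear_combination 9 * hω + (2 * ω + 4) * h5⟩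
    · exact Finset.mem_image.2 ⟨ω + 4, Finset.mem_erase.2 ⟨by
          have h' := hNZ 1 4 (by decide)
          simpa [hψ1, hψ4] using h', Finset.mem_univ _⟩,
        by simp only [hedef, hψ3]; linear_combination hω + (ω + 3) * h5⟩
    · exact Finset.mem_image.2 ⟨2 * ω + 1, Finset.mem_erase.2 ⟨by
          have h' := hNZ 2 1 (by decide)
          simpa [hψ2, hψ1] using h', Finset.mem_univ _⟩,
        by simp only [hedef, hψ4]; linear_combination 4 * hω + h5⟩
    · exact Finset.mem_image.2 ⟨ω + 2, Finset.mem_erase.2 ⟨by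
          have h' := hNZ 1 2 (by decide)
          simpa [hψ1, hψ2] using h', Finset.mem_univ _⟩,
        by simp only [hedef, hψ4, hψ1]; linear_combination hω + h5⟩
    · exact Finset.mem_image.2 ⟨2 * ω + 2, Finset.mem_erase.2 ⟨by
          have h' := hNZ 2 2 (by decide)
          simpa [hψ2] using h', Finset.mem_univ _⟩,
        by simp only [hedef, hψ3, hψ2]; linear_combination 4 * hω + (ω + 2) * h5⟩
    · exact Finset.mem_image.2 ⟨4 * ω + 4, Finset.mem_erase.2 ⟨by
          have h' := hNZ 4 4 (by decide)
          simpa [hψ4] using h', Finset.mem_univ _⟩,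
        by simp only [hedef, hψ2, hψ3]; linear_combination 16 * hω + (6 * ω + 9) * h5⟩
    · exact Finset.mem_image.2 ⟨2 * ω + 4, Finset.mem_erase.2 ⟨by
          have h' := hNZ 2 4 (by decide)
          simpa [hψ2, hψ4] using h', Finset.mem_univ _⟩,
        by simp only [hedef, hψ1, hψ4]; linear_combination 4 * hω + (3 * ω + 4) * h5⟩
  have hQcard : (({(0,1),(0,2),(0,3),(0,4),(1,1),(2,2),(3,3),(4,4),(4,1),(3,2),(2,3),(1,4)} :
      Finset (ZMod 5 × ZMod 5)).image e).card = 12 := by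
    rw [Finset.card_image_of_injective _ he]
    decide
  have hQeq := Finset.eq_of_subset_of_card_le hQI (by omega)
  -- t is one of the 12 squares
  have htI : t ∈ I := Finset.mem_image.2 ⟨z, Finset.mem_erase.2
    ⟨fun h0 => ht0 (by rw [← hz, h0]; ring), Finset.mem_univ z⟩, hz⟩
  rw [← hQeq] at htI
  obtain ⟨p, hp, hpt⟩ := Finset.mem_image.1 htI
  have ht12 : t = 1 ∨ t = 2 ∨ t = 3 ∨ t = 4 ∨ t = ω + 1 ∨ t = 2 * ω + 2 ∨
      t = 3 * ω + 3 ∨ t = 4 * ω + 4 ∨ t = 4 * ω + 1 ∨ t = 3 * ω + 2 ∨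
      t = 2 * ω + 3 ∨ t = ω + 4 := by
    fin_cases hp
    · exact Or.inl (by rw [← hpt]; simp [hedef, hψ0, hψ1])
    · exact Or.inr <| Or.inl (by rw [← hpt]; simp [hedef, hψ0, hψ2])
    · exact Or.inr <| Or.inr <| Or.inl (by rw [← hpt]; simp [hedef, hψ0, hψ3])
    · exact Or.inr <| Or.inr <| Or.inr <| Or.inl (by rw [← hpt]; simp [hedef, hψ0, hψ4])
    · exact Or.inr <| Or.inr <| Or.inr <| Or.inr <| Or.inl
        (by rw [← hpt]; simp [hedef, hψ1])
    · exact Or.inr <| Or.inr <| Or.inr <| Or.inr <| Or.inr <| Or.inl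
        (by rw [← hpt]; simp [hedef, hψ2])
    · exact Or.inr <| Or.inr <| Or.inr <| Or.inr <| Or.inr <| Or.inr <| Or.inl
        (by rw [← hpt]; simp [hedef, hψ3])
    · exact Or.inr <| Or.inr <| Or.inr <| Or.inr <| Or.inr <| Or.inr <| Or.inr <| Or.inl
        (by rw [← hpt]; simp [hedef, hψ4])
    · exact Or.inr <| Or.inr <| Or.inr <| Or.inr <| Or.inr <| Or.inr <| Or.inr <| Or.inr <|
        Or.inl (by rw [← hpt]; simp [hedef, hψ4, hψ1])
    · exact Or.inr <| Or.inr <| Or.inr <| Or.inr <| Or.inr <| Or.inr <| Or.inr <| Or.inr <|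
        Or.inr <| Or.inl (by rw [← hpt]; simp [hedef, hψ3, hψ2])
    · exact Or.inr <| Or.inr <| Or.inr <| Or.inr <| Or.inr <| Or.inr <| Or.inr <| Or.inr <|
        Or.inr <| Or.inr <| Or.inl (by rw [← hpt]; simp [hedef, hψ2, hψ3])
    · exact Or.inr <| Or.inr <| Or.inr <| Or.inr <| Or.inr <| Or.inr <| Or.inr <| Or.inr <|
        Or.inr <| Or.inr <| Or.inr (by rw [← hpt]; simp [hedef, hψ1, hψ4])
  -- the three key equations
  haveI : Fact (1 < ℓ) := ⟨hl.one_lt⟩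
  have hn0 : n ≠ 0 := hn.ne_zero
  have hne : (1 : ZMod ℓ) ≠ -1 := by
    intro h
    have h2 : ((2 : ℕ) : ZMod ℓ) = 0 := by push_cast; linear_combination h
    have hd : ℓ ∣ 2 := (CharP.cast_eq_zero_iff (ZMod ℓ) ℓ 2).1 h2
    have := Nat.le_of_dvd (by norm_num) hd
    omega
  have E1 : n = β t := by
    have h := H 1 one_ne_zero ⟨1, one_pow 2⟩
    rwa [hα1, mul_one, map_one, mul_one] at h
  have E2 : n = β (t * 3) := by
    have h := H 3 h3ne ⟨2 * ω, hsq3⟩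
    rw [hα2, mul_one] at h
    rwa [show σ (3 : F) = 3 from map_ofNat σ 3] at h
  have E3 : n = β (t * (σ ω + 1)) := by
    have h := H (ω + 1) hω1ne ⟨ω + 3, hsqω1⟩
    rwa [hα3, mul_one, map_add, map_one] at h
  rcases ht12 with h | h | h | h | h | h | h | h | h | h | h | h <;> subst h
  · rw [hβ1] at E1; exact hn0 E1
  · rw [hβ2'] at E1; exact hn0 E1
  · rw [hβ2] at E1; exact hn0 E1
  · rw [hβ4'] at E1; exact hn0 E1
  · rw [show (ω + 1) * (3 : F) = 3 * ω + 3 by ring, hβ4] at E2; exact hn0 E2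
  · rw [hβ22] at E1; exact hn0 E1
  · rw [hβ4] at E1; exact hn0 E1
  · rw [show (4 * ω + 4) * (3 : F) = 2 * ω + 2 by linear_combination 2 * (ω + 1) * h5,
      hβ22] at E2
    exact hn0 E2
  · rcases hσω with hs | hs <;> rw [hs] at E3
    · rw [show (4 * ω + 1) * (ω + 1) = (4 : F) by linear_combination 4 * hω + (ω + 1) * h5,
        hβ4'] at E3
      exact hn0 E3
    · rw [show (4 * ω + 1) * (-ω + 1) = 3 * ω + 3 by linear_combination (-4) * hω - 2 * h5,
        hβ4] at E3
      exact hn0 E3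
  · rw [hβ32] at E1
    rw [show (3 * ω + 2) * (3 : F) = 4 * ω + 1 by linear_combination (ω + 1) * h5,
      hβ5] at E2
    exact hne (E2.symm.trans E1)
  · rw [hβ6] at E1
    rw [show (2 * ω + 3) * (3 : F) = ω + 4 by linear_combination (ω + 1) * h5,
      hβ14] at E2
    exact hne (E1.symm.trans E2)
  · rcases hσω with hs | hs <;> rw [hs] at E3
    · rw [show (ω + 4) * (ω + 1) = (1 : F) by linear_combination hω + (ω + 1) * h5,
        hβ1] at E3
      exact hn0 E3
    · rw [show (ω + 4) * (-ω + 1) = 2 * ω + 2 by linear_combination (-1) * hω - ω * h5,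
        hβ22] at E3
      exact hn0 E3
end
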